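/- arXiv:2303.01024 — 7 statements merged into one kernel-verified Lean document; each statement's English description precedes it below -/
import Mathlib

section
/- Define a sequence of polynomials over ℤ by P_1(x) = 1+x, Q_2(x) = (1+x)^2, and for n ≥ 1: P_{2n+1}(x) = Q_{2n}(x) + x(2nx+1) and Q_{2n+2}(x) = (1+x)·P_{2n+1}(x). Then for all n ≥ 1, P_{2n-1}(x) = 3(1+x)^n + (1+x)^{n-1} - 2nx - 3 and Q_{2n}(x) = 3(1+x)^{n+1} + (1+x)^n - (1+x)(2nx+3). -/
open Polynomial

theorem stmt_2 (P Q : ℕ → Polynomial ℤ)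
    (hP1 : P 1 = 1 + X) (hQ2 : Q 2 = (1 + X) ^ 2)
    (hP : ∀ n : ℕ, 1 ≤ n → P (2 * n + 1) = Q (2 * n) + X * (2 * (n : Polynomial ℤ) * X + 1))
    (hQ : ∀ n : ℕ, 1 ≤ n → Q (2 * n + 2) = (1 + X) * P (2 * n + 1)) :
    ∀ n : ℕ, 1 ≤ n →
      P (2 * n - 1) = 3 * (1 + X) ^ n + (1 + X) ^ (n - 1) - 2 * (n : Polynomial ℤ) * X - 3 ∧
      Q (2 * n) = 3 * (1 + X) ^ (n + 1) + (1 + X) ^ n -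
        (1 + X) * (2 * (n : Polynomial ℤ) * X + 3) := by
  intro n
  induction n with
  | zero => intro h; omega
  | succ n ih =>
    intro _
    rcases Nat.eq_zero_or_pos n with rfl | hn
    · constructor
      · simpa using hP1.trans (by ring)
      · simpa using hQ2.trans (by ring)
    · obtain ⟨ihP, ihQ⟩ := ih hn
      have hPn : P (2 * (n + 1) - 1) =
          3 * (1 + X) ^ (n + 1) + (1 + X) ^ n - 2 * ((n : Polynomial ℤ) + 1) * X - 3 := by
        have : 2 * (n + 1) - 1 = 2 * n + 1 := by omega
        rw [this, hP n hn, ihQ]; ring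
      constructor
      · simpa using hPn
      · have h2 : 2 * (n + 1) = 2 * n + 2 := by ring
        rw [h2, hQ n hn]
        have : 2 * n + 1 = 2 * (n + 1) - 1 := by omega
        rw [this, hPn]
        push_cast
        ring
end

section
/- Define P_1(x) = 1+x, Q_2(x) = (1+x)^2, and for n ≥ 1: P_{2n+1}(x) = Q_{2n}(x) + x(2nx+1), Q_{2n+2}(x) = (1+x)·P_{2n+1}(x). Then for all n ≥ 1, the coefficient of x^3 in Q_{2n}(x) equals n(n-1)(4n+1)/6 and the coefficient of x^4 in Q_{2n}(x) equals n^2(n-1)(n-2)/6. -/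
open Polynomial

theorem stmt_3 (P Q : ℕ → Polynomial ℤ)
    (hP1 : P 1 = 1 + X) (hQ2 : Q 2 = (1 + X) ^ 2)
    (hP : ∀ n : ℕ, 1 ≤ n → P (2 * n + 1) = Q (2 * n) + X * (2 * (n : Polynomial ℤ) * X + 1))
    (hQ : ∀ n : ℕ, 1 ≤ n → Q (2 * n + 2) = (1 + X) * P (2 * n + 1)) :
    ∀ n : ℕ, 1 ≤ n →
      (((Q (2 * n)).coeff 3 : ℚ) = (n : ℚ) * (n - 1) * (4 * n + 1) / 6) ∧
      (((Q (2 * n)).coeff 4 : ℚ) = (n : ℚ) ^ 2 * (n - 1) * (n - 2) / 6) := by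
  have key : ∀ n : ℕ, 1 ≤ n →
      ((Q (2 * n)).coeff 0 = 1) ∧
      ((Q (2 * n)).coeff 1 = 2 * n) ∧
      ((Q (2 * n)).coeff 2 = n * (2 * n - 1)) ∧
      (((Q (2 * n)).coeff 3 : ℚ) = (n : ℚ) * (n - 1) * (4 * n + 1) / 6) ∧
      (((Q (2 * n)).coeff 4 : ℚ) = (n : ℚ) ^ 2 * (n - 1) * (n - 2) / 6) := by
    intro n hn
    induction n, hn using Nat.le_induction with
    | base =>
      norm_num [hQ2, add_sq, coeff_add, coeff_X_pow, coeff_one, coeff_X]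
    | succ n hn ih =>
      obtain ⟨h0, h1, h2, h3, h4⟩ := ih
      have hQn : Q (2 * (n + 1)) = (1 + X) * (Q (2 * n) + (C ((2 : ℤ) * n) * X ^ 2 + X)) := by
        have e : 2 * (n + 1) = 2 * n + 2 := by ring
        rw [e, hQ n hn, hP n hn]
        congr 1
        rw [C_mul, C_eq_natCast]
        simp only [map_ofNat]
        ring
      have e0 : (Q (2 * (n + 1))).coeff 0 = (Q (2 * n)).coeff 0 := by
        rw [hQn, add_mul, one_mul]
        simp only [coeff_add, coeff_C_mul, coeff_X_pow, coeff_X]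
        norm_num
      have e1 : (Q (2 * (n + 1))).coeff 1
          = (Q (2 * n)).coeff 1 + 1 + (Q (2 * n)).coeff 0 := by
        rw [hQn, add_mul, one_mul, coeff_add, show (1 : ℕ) = 0 + 1 from rfl, coeff_X_mul]
        simp only [coeff_add, coeff_C_mul, coeff_X_pow, coeff_X]
        norm_num
      have e2 : (Q (2 * (n + 1))).coeff 2
          = (Q (2 * n)).coeff 2 + 2 * n + ((Q (2 * n)).coeff 1 + 1) := by
        rw [hQn, add_mul, one_mul, coeff_add, show (2 : ℕ) = 1 + 1 from rfl, coeff_X_mul]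
        simp only [coeff_add, coeff_C_mul, coeff_X_pow, coeff_X]
        norm_num
      have e3 : (Q (2 * (n + 1))).coeff 3
          = (Q (2 * n)).coeff 3 + ((Q (2 * n)).coeff 2 + 2 * n) := by
        rw [hQn, add_mul, one_mul, coeff_add, show (3 : ℕ) = 2 + 1 from rfl, coeff_X_mul]
        simp only [coeff_add, coeff_C_mul, coeff_X_pow, coeff_X]
        norm_num
      have e4 : (Q (2 * (n + 1))).coeff 4
          = (Q (2 * n)).coeff 4 + (Q (2 * n)).coeff 3 := by
        rw [hQn, add_mul, one_mul, coeff_add, show (4 : ℕ) = 3 + 1 from rfl, coeff_X_mul]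
        simp only [coeff_add, coeff_C_mul, coeff_X_pow, coeff_X]
        norm_num
      refine ⟨?_, ?_, ?_, ?_, ?_⟩
      · rw [e0, h0]
      · rw [e1, h1, h0]; push_cast; ring
      · rw [e2, h1, h2]; push_cast; ring
      · rw [e3]
        push_cast
        rw [h3]
        have h2' : ((Q (2 * n)).coeff 2 : ℚ) = (n : ℚ) * (2 * n - 1) := by
          rw [h2]; push_cast; ring
        rw [h2']
        push_cast
        ring
      · rw [e4]
        push_cast
        rw [h3, h4]
        push_cast
        ring
  intro n hn
  exact ⟨(key n hn).2.2.2.1, (key n hn).2.2.2.2⟩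
end

section
/- For all integers n ≥ 1, the coefficient sequence of the polynomial 3(1+x)^{n+1} + (1+x)^n - (1+x)(2nx+3) is log-concave, i.e., if a_i denotes the coefficient of x^i, then a_i^2 ≥ a_{i-1}·a_{i+1} for all i ≥ 1. -/
open Polynomial

lemma two_choose_two (n : ℕ) : 2 * (n+1).choose 2 = (n+1) * n := by
  induction n with
  | zero => rfl
  | succ m ih =>
    rw [Nat.choose_succ_succ, Nat.mul_add, ih, Nat.choose_one_right]
    ring

lemma six_choose_three (k : ℕ) : 6 * (k+2).choose 3 = (k+2)*(k+1)*k := by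
  induction k with
  | zero => rfl
  | succ m ih =>
    rw [Nat.choose_succ_succ, Nat.mul_add, ih]
    have h := two_choose_two (m+1)
    nlinarith [h]

lemma cancel_le {a b A B : ℕ} (h : a * A = b * B) (hBA : B ≤ A) (hA : 0 < A) : a ≤ b := by
  have : a * A ≤ b * A := h ▸ Nat.mul_le_mul_left b hBA
  exact Nat.le_of_mul_le_mul_right this hA

lemma binlc (m j : ℕ) : m.choose j * m.choose (j+2) ≤ m.choose (j+1) * m.choose (j+1) := by
  by_cases hm : j < m
  · have h1 := Nat.choose_succ_right_eq m (j+1)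
    have h2 := Nat.choose_succ_right_eq m j
    apply cancel_le (A := (j+2)*(m-j)) (B := (j+1)*(m-(j+1)))
    · calc m.choose j * m.choose (j+2) * ((j+2)*(m-j))
          = (m.choose (j+2) * (j+2)) * (m.choose j * (m-j)) := by ring
        _ = (m.choose (j+1) * (m - (j+1))) * (m.choose (j+1) * (j+1)) := by rw [h1, ← h2]
        _ = m.choose (j+1) * m.choose (j+1) * ((j+1)*(m-(j+1))) := by ring
    · exact Nat.mul_le_mul (by omega) (by omega)
    · exact Nat.mul_pos (by omega) (by omega)
  · have : m < j + 2 := by omega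
    simp [Nat.choose_eq_zero_of_lt this]

lemma cross1 (n j : ℕ) : (n+1).choose (j+2) * n.choose j ≤ (n+1).choose (j+1) * n.choose (j+1) := by
  by_cases hm : j < n
  · have h1 := Nat.choose_succ_right_eq (n+1) (j+1)
    have h2 := Nat.choose_succ_right_eq n j
    rw [Nat.succ_sub_succ] at h1
    apply cancel_le (A := (j+2)*(n-j)) (B := (j+1)*(n-j))
    · calc (n+1).choose (j+2) * n.choose j * ((j+2)*(n-j))
          = ((n+1).choose (j+2) * (j+2)) * (n.choose j * (n-j)) := by ring
        _ = ((n+1).choose (j+1) * (n - j)) * (n.choose (j+1) * (j+1)) := by rw [h1, ← h2]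
        _ = (n+1).choose (j+1) * n.choose (j+1) * ((j+1)*(n-j)) := by ring
    · exact Nat.mul_le_mul (by omega) le_rfl
    · exact Nat.mul_pos (by omega) (by omega)
  · have : n + 1 < j + 2 := by omega
    simp [Nat.choose_eq_zero_of_lt this]

lemma cross2 (n j : ℕ) : (n+1).choose j * n.choose (j+2) ≤ (n+1).choose (j+1) * n.choose (j+1) := by
  by_cases hm : j + 1 < n
  · have h1 := Nat.choose_succ_right_eq n (j+1)
    have h2 := Nat.choose_succ_right_eq (n+1) j
    apply cancel_le (A := (j+2)*((n+1)-j)) (B := (j+1)*(n-(j+1)))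
    · calc (n+1).choose j * n.choose (j+2) * ((j+2)*((n+1)-j))
          = (n.choose (j+2) * (j+2)) * ((n+1).choose j * ((n+1)-j)) := by ring
        _ = (n.choose (j+1) * (n - (j+1))) * ((n+1).choose (j+1) * (j+1)) := by rw [h1, ← h2]
        _ = (n+1).choose (j+1) * n.choose (j+1) * ((j+1)*(n-(j+1))) := by ring
    · exact Nat.mul_le_mul (by omega) (by omega)
    · exact Nat.mul_pos (by omega) (by omega)
  · have : n < j + 2 := by omega
    simp [Nat.choose_eq_zero_of_lt this]

lemma blc (n j : ℕ) :
    (3 * (n+1).choose j + n.choose j) * (3 * (n+1).choose (j+2) + n.choose (j+2)) ≤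
      (3 * (n+1).choose (j+1) + n.choose (j+1)) ^ 2 := by
  nlinarith [binlc (n+1) j, binlc n j, cross1 n j, cross2 n j]

lemma coeffP (n i : ℕ) :
    (3 * (1 + X) ^ (n + 1) + (1 + X) ^ n -
        (1 + X) * (2 * (n : Polynomial ℤ) * X + 3)).coeff i =
      3 * (n+1).choose i + n.choose i -
        (if i = 0 then 3 else if i = 1 then 2*(n:ℤ)+3 else if i = 2 then 2*n else 0) := by
  have h : ((1:ℤ[X]) + X) * (2 * (n : Polynomial ℤ) * X + 3) =
      C ((2:ℤ)*n) * X^2 + C (2*(n:ℤ)+3) * X + C 3 := by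
    simp only [map_add, map_mul, map_ofNat, C_eq_natCast]
    ring
  have h3 : (3 : ℤ[X]) = C 3 := by norm_num
  rw [coeff_sub, coeff_add, h, h3, coeff_C_mul, coeff_one_add_X_pow, coeff_one_add_X_pow,
    coeff_add, coeff_add, coeff_C_mul, coeff_C_mul, coeff_X_pow, coeff_X, coeff_C]
  rcases i with _|_|_|i <;> simp

theorem stmt_4 (n : ℕ) (hn : 1 ≤ n) (i : ℕ) (hi : 1 ≤ i) :
    ((3 * (1 + X) ^ (n + 1) + (1 + X) ^ n -
        (1 + X) * (2 * (n : Polynomial ℤ) * X + 3)).coeff i) ^ 2 ≥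
      (3 * (1 + X) ^ (n + 1) + (1 + X) ^ n -
        (1 + X) * (2 * (n : Polynomial ℤ) * X + 3)).coeff (i - 1) *
      (3 * (1 + X) ^ (n + 1) + (1 + X) ^ n -
        (1 + X) * (2 * (n : Polynomial ℤ) * X + 3)).coeff (i + 1) := by
  obtain ⟨m, rfl⟩ : ∃ m, n = m + 1 := ⟨n - 1, by omega⟩
  rw [coeffP, coeffP, coeffP]
  rcases i with _|_|_|_|k
  · omega
  · -- i = 1
    simp only [show (1:ℕ)-1 = 0 from rfl]
    norm_num [Nat.choose_one_right]
    have h2 := two_choose_two (m+1)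
    have h2' := two_choose_two m
    have h2z : (2:ℤ) * ((m+2).choose 2 : ℤ) = (m+2)*(m+1) := by exact_mod_cast h2
    have h2z' : (2:ℤ) * ((m+1).choose 2 : ℤ) = (m+1)*m := by exact_mod_cast h2'
    push_cast
    nlinarith [h2z, h2z', sq_nonneg ((m:ℤ))]
  · -- i = 2
    norm_num [Nat.choose_one_right]
    have h2z : (2:ℤ) * ((m+2).choose 2 : ℤ) = (m+2)*(m+1) := by
      exact_mod_cast two_choose_two (m+1)
    have h2z' : (2:ℤ) * ((m+1).choose 2 : ℤ) = (m+1)*m := by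
      exact_mod_cast two_choose_two m
    have h3z : (6:ℤ) * ((m+2).choose 3 : ℤ) = (m+2)*(m+1)*m := by
      exact_mod_cast six_choose_three m
    have hmono : ((m+1).choose 3 : ℤ) ≤ ((m+2).choose 3 : ℤ) := by
      exact_mod_cast Nat.choose_le_choose 3 (by omega)
    have hpos : (0:ℤ) ≤ ((m+1).choose 3 : ℤ) := by positivity
    push_cast
    nlinarith [h2z, h2z', h3z, hmono, hpos, sq_nonneg ((m:ℤ)), sq_nonneg ((m:ℤ)*(m:ℤ))]
  · -- i = 3
    norm_num
    have hb : ((3 * (m+2).choose 2 + (m+1).choose 2) * (3 * (m+2).choose 4 + (m+1).choose 4) : ℤ)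
        ≤ ((3 * (m+2).choose 3 + (m+1).choose 3 : ℕ) : ℤ) ^ 2 := by
      exact_mod_cast blc (m+1) 2
    have h4 : (0:ℤ) ≤ (3 * ((m+2).choose 4 : ℤ) + (m+1).choose 4) := by positivity
    push_cast at hb ⊢
    nlinarith [hb, h4, (by positivity : (0:ℤ) ≤ (m:ℤ) + 1)]
  · -- i ≥ 4
    have e1 : k + 4 - 1 = k + 3 := rfl
    rw [e1, if_neg (by omega), if_neg (by omega), if_neg (by omega),
      if_neg (by omega), if_neg (by omega), if_neg (by omega),
      if_neg (by omega), if_neg (by omega), if_neg (by omega)]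
    have hb : ((3 * (m+2).choose (k+3) + (m+1).choose (k+3)) *
        (3 * (m+2).choose (k+5) + (m+1).choose (k+5)) : ℤ)
        ≤ ((3 * (m+2).choose (k+4) + (m+1).choose (k+4) : ℕ) : ℤ) ^ 2 := by
      exact_mod_cast blc (m+1) (k+3)
    push_cast at hb ⊢
    ring_nf at hb ⊢
    linarith [hb]
end

section
/- If p(x) and q(x) are polynomials with nonnegative real coefficients whose coefficient sequences are log-concave and have no internal zeros, then the coefficient sequence of p(x)·q(x) is log-concave. -/
open Polynomial Finset

/-- Extension of polynomial coefficients to ℤ indices. -/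
noncomputable def extZ (r : Polynomial ℝ) : ℤ → ℝ :=
  fun k => if 0 ≤ k then r.coeff k.toNat else 0

lemma extZ_neg (r : Polynomial ℝ) {k : ℤ} (hk : k < 0) : extZ r k = 0 := by
  rw [extZ]; exact if_neg (by omega)

lemma extZ_natCast (r : Polynomial ℝ) (m : ℕ) : extZ r (m : ℤ) = r.coeff m := by
  rw [extZ, if_pos (Int.natCast_nonneg m), Int.toNat_natCast]

lemma extZ_nonneg (r : Polynomial ℝ) (h : ∀ i, 0 ≤ r.coeff i) (k : ℤ) : 0 ≤ extZ r k := by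
  rw [extZ]; split
  · exact h _
  · exact le_rfl

lemma extZ_lc (r : Polynomial ℝ) (h0 : ∀ i, 0 ≤ r.coeff i)
    (hlc : ∀ i : ℕ, 1 ≤ i → (r.coeff i) ^ 2 ≥ r.coeff (i - 1) * r.coeff (i + 1)) :
    ∀ k : ℤ, extZ r (k - 1) * extZ r (k + 1) ≤ extZ r k * extZ r k := by
  intro k
  rcases le_or_gt 1 k with h | h
  · have e1 : extZ r (k - 1) = r.coeff (k.toNat - 1) := by
      rw [extZ, if_pos (by omega)]; congr 1; omega
    have e2 : extZ r (k + 1) = r.coeff (k.toNat + 1) := by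
      rw [extZ, if_pos (by omega)]; congr 1; omega
    have e3 : extZ r k = r.coeff k.toNat := by rw [extZ, if_pos (by omega)]
    rw [e1, e2, e3]
    have h2 := hlc k.toNat (by omega)
    nlinarith [h2]
  · rw [extZ_neg r (by omega : k - 1 < 0), zero_mul]
    exact mul_nonneg (extZ_nonneg r h0 k) (extZ_nonneg r h0 k)

lemma extZ_nz (r : Polynomial ℝ)
    (hnz : ∀ i j k : ℕ, i < j → j < k → 0 < r.coeff i → 0 < r.coeff k → 0 < r.coeff j) :
    ∀ x y z : ℤ, x < y → y < z → 0 < extZ r x → 0 < extZ r z → 0 < extZ r y := by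
  intro x y z hxy hyz hx hz
  have hx0 : 0 ≤ x := by
    by_contra h
    rw [extZ_neg r (by omega)] at hx
    exact lt_irrefl 0 hx
  have ex : extZ r x = r.coeff x.toNat := by rw [extZ, if_pos hx0]
  have ey : extZ r y = r.coeff y.toNat := by rw [extZ, if_pos (by omega)]
  have ez : extZ r z = r.coeff z.toNat := by rw [extZ, if_pos (by omega)]
  rw [ex] at hx; rw [ez] at hz; rw [ey]
  exact hnz x.toNat y.toNat z.toNat (by omega) (by omega) hx hz

/-- generalized log-concavity over ℤ -/
lemma genLC (a : ℤ → ℝ) (h0 : ∀ i, 0 ≤ a i)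
    (hlc : ∀ i : ℤ, a (i - 1) * a (i + 1) ≤ a i * a i)
    (hnz : ∀ i j k : ℤ, i < j → j < k → 0 < a i → 0 < a k → 0 < a j) :
    ∀ r s : ℤ, r ≤ s → a (r - 1) * a (s + 1) ≤ a r * a s := by
  have key : ∀ d : ℕ, ∀ r : ℤ, a (r - 1) * a (r + (d : ℤ) + 1) ≤ a r * a (r + (d : ℤ)) := by
    intro d
    induction d with
    | zero => intro r; simpa using hlc r
    | succ d ih =>
      intro r
      have e1 : r + ((d + 1 : ℕ) : ℤ) + 1 = (r + (d : ℤ)) + 2 := by push_cast; ring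
      have e2 : r + ((d + 1 : ℕ) : ℤ) = (r + (d : ℤ)) + 1 := by push_cast; ring
      rw [e1, e2]
      set s : ℤ := r + (d : ℤ) with hs
      have h1 : a (r - 1) * a (s + 1) ≤ a r * a s := ih r
      have h2 : a s * a (s + 2) ≤ a (s + 1) * a (s + 1) := by
        have := hlc (s + 1)
        rw [show s + 1 - 1 = s from by ring, show s + 1 + 1 = s + 2 from by ring] at this
        exact this
      rcases eq_or_lt_of_le (h0 (s + 1)) with hz | hpos
      · have hL : a (r - 1) = 0 ∨ a (s + 2) = 0 := by
          by_contra hcon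
          push_neg at hcon
          have p1 : 0 < a (r - 1) := (h0 _).lt_of_ne (Ne.symm hcon.1)
          have p2 : 0 < a (s + 2) := (h0 _).lt_of_ne (Ne.symm hcon.2)
          have := hnz (r - 1) (s + 1) (s + 2) (by omega) (by omega) p1 p2
          rw [← hz] at this
          exact lt_irrefl 0 this
        have hzero : a (r - 1) * a (s + 2) = 0 := by
          rcases hL with h | h <;> simp [h]
        rw [hzero]
        exact mul_nonneg (h0 _) (h0 _)
      · rcases eq_or_lt_of_le (h0 s) with hz | hposS
        · have hr1 : a (r - 1) = 0 := by
            by_contra hcon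
            have p1 : 0 < a (r - 1) := (h0 _).lt_of_ne (Ne.symm hcon)
            have := hnz (r - 1) s (s + 1) (by omega) (by omega) p1 hpos
            rw [← hz] at this
            exact lt_irrefl 0 this
          rw [hr1, zero_mul]
          exact mul_nonneg (h0 _) (h0 _)
        · have hm := mul_le_mul h1 h2 (mul_nonneg (h0 _) (h0 _)) (mul_nonneg (h0 _) (h0 _))
          have hpos2 : 0 < a s * a (s + 1) := mul_pos hposS hpos
          nlinarith [hm, hpos2]
  intro r s hrs
  obtain ⟨d, hd⟩ : ∃ d : ℕ, s = r + (d : ℤ) := ⟨(s - r).toNat, by omega⟩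
  rw [hd]
  exact key d r

/-- convolution identity -/
lemma convZ (p q : Polynomial ℝ) (m L : ℤ) (hm : 0 ≤ m) (hL : m ≤ L) :
    extZ (p * q) m = ∑ k ∈ Finset.Icc (-3 : ℤ) L, extZ p k * extZ q (m - k) := by
  have h1 : extZ (p * q) m
      = ∑ k ∈ Finset.range (m.toNat + 1), p.coeff k * q.coeff (m.toNat - k) := by
    rw [extZ, if_pos hm, Polynomial.coeff_mul]
    exact Finset.Nat.sum_antidiagonal_eq_sum_range_succ (fun i j => p.coeff i * q.coeff j) m.toNat
  have h2 : ∑ k ∈ Finset.Icc (-3 : ℤ) L, extZ p k * extZ q (m - k)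
      = ∑ k ∈ Finset.Icc (0 : ℤ) m, extZ p k * extZ q (m - k) := by
    symm
    apply Finset.sum_subset
    · intro x hx
      simp only [Finset.mem_Icc] at *
      omega
    · intro x hx hx'
      simp only [Finset.mem_Icc] at hx hx'
      rcases (by omega : x < 0 ∨ m < x) with h | h
      · rw [extZ_neg p h, zero_mul]
      · rw [extZ_neg q (by omega), mul_zero]
  rw [h1, h2]
  symm
  apply Finset.sum_nbij' (fun k : ℤ => k.toNat) (fun k : ℕ => (k : ℤ))
  · intro x hx
    simp only [Finset.mem_Icc] at hx
    simp only [Finset.mem_range]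
    omega
  · intro x hx
    simp only [Finset.mem_range] at hx
    simp only [Finset.mem_Icc]
    omega
  · intro x hx
    simp only [Finset.mem_Icc] at hx
    omega
  · intro x hx
    simp only [Finset.mem_range] at hx
    omega
  · intro x hx
    simp only [Finset.mem_Icc] at hx
    have ep : extZ p x = p.coeff x.toNat := by rw [extZ, if_pos (by omega)]
    have eq1 : extZ q (m - x) = q.coeff (m.toNat - x.toNat) := by
      rw [extZ, if_pos (by omega)]; congr 1; omega
    rw [ep, eq1]

/-- shifted sum equals sum, for functions vanishing outside `Icc 0 (n+1)` -/
lemma shiftZ (f : ℤ → ℝ) (n σ : ℤ) (hσ1 : -2 ≤ σ) (hσ2 : σ ≤ 2)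
    (hf : ∀ k, k ∉ Finset.Icc (0 : ℤ) (n + 1) → f k = 0) :
    ∑ k ∈ Finset.Icc (-3 : ℤ) (n + 3), f (k + σ)
      = ∑ k ∈ Finset.Icc (-3 : ℤ) (n + 3), f k := by
  have R : ∑ k ∈ Finset.Icc (-3 : ℤ) (n + 3), f k = ∑ k ∈ Finset.Icc (0 : ℤ) (n + 1), f k := by
    symm
    apply Finset.sum_subset
    · intro x hx; simp only [Finset.mem_Icc] at *; omega
    · intro x _ hx'; exact hf x hx'
  have L : ∑ k ∈ Finset.Icc (-3 : ℤ) (n + 3), f (k + σ)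
      = ∑ k ∈ Finset.Icc (-σ) (n + 1 - σ), f (k + σ) := by
    symm
    apply Finset.sum_subset
    · intro x hx; simp only [Finset.mem_Icc] at *; omega
    · intro x hx hx'
      apply hf
      simp only [Finset.mem_Icc] at *
      omega
  rw [L, R]
  have hmap : Finset.Icc (0 : ℤ) (n + 1) = (Finset.Icc (-σ) (n + 1 - σ)).map (addRightEmbedding σ) := by
    rw [Finset.map_add_right_Icc]
    congr 1 <;> ring
  rw [hmap, Finset.sum_map]
  rfl

theorem stmt_6 (p q : Polynomial ℝ)
    (hp0 : ∀ i, 0 ≤ p.coeff i) (hq0 : ∀ i, 0 ≤ q.coeff i)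
    (hplc : ∀ i : ℕ, 1 ≤ i → (p.coeff i) ^ 2 ≥ p.coeff (i - 1) * p.coeff (i + 1))
    (hqlc : ∀ i : ℕ, 1 ≤ i → (q.coeff i) ^ 2 ≥ q.coeff (i - 1) * q.coeff (i + 1))
    (hpnz : ∀ i j k : ℕ, i < j → j < k → 0 < p.coeff i → 0 < p.coeff k → 0 < p.coeff j)
    (hqnz : ∀ i j k : ℕ, i < j → j < k → 0 < q.coeff i → 0 < q.coeff k → 0 < q.coeff j) :
    ∀ i : ℕ, 1 ≤ i →
      ((p * q).coeff i) ^ 2 ≥ (p * q).coeff (i - 1) * (p * q).coeff (i + 1) := by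
  intro i hi
  set n : ℤ := (i : ℤ) with hn
  have hn1 : 1 ≤ n := by omega
  have glcP := genLC (extZ p) (extZ_nonneg p hp0) (extZ_lc p hp0 hplc) (extZ_nz p hpnz)
  have glcQ := genLC (extZ q) (extZ_nonneg q hq0) (extZ_lc q hq0 hqlc) (extZ_nz q hqnz)
  set S := Finset.Icc (-3 : ℤ) (n + 3) with hS
  -- single-sum values
  have sB1 : ∑ l ∈ S, extZ p l * extZ q (n - l) = extZ (p * q) n :=
    (convZ p q n (n + 3) (by omega) (by omega)).symm
  have sB2 : ∑ l ∈ S, extZ p l * extZ q (n - l - 1) = extZ (p * q) (n - 1) := by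
    have e : ∀ l : ℤ, extZ q (n - l - 1) = extZ q (n - 1 - l) := by
      intro l; congr 1; ring
    simp only [e]
    exact (convZ p q (n - 1) (n + 3) (by omega) (by omega)).symm
  have sA2 : ∑ k ∈ S, extZ p k * extZ q (n - k + 1) = extZ (p * q) (n + 1) := by
    have e : ∀ k : ℤ, extZ q (n - k + 1) = extZ q (n + 1 - k) := by
      intro k; congr 1; ring
    simp only [e]
    exact (convZ p q (n + 1) (n + 3) (by omega) (by omega)).symm
  have vanish : ∀ m : ℤ, m ≤ n + 1 → ∀ k : ℤ, k ∉ Finset.Icc (0 : ℤ) (n + 1) →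
      extZ p k * extZ q (m - k) = 0 := by
    intro m hm k hk
    simp only [Finset.mem_Icc] at hk
    rcases (by omega : k < 0 ∨ n + 1 < k) with h | h
    · rw [extZ_neg p h, zero_mul]
    · rw [extZ_neg q (by omega), mul_zero]
  have sA3 : ∑ k ∈ S, extZ p (k - 1) * extZ q (n - k) = extZ (p * q) (n - 1) := by
    have h := shiftZ (fun j => extZ p j * extZ q (n - 1 - j)) n (-1) (by norm_num) (by norm_num)
      (vanish (n - 1) (by omega))
    calc ∑ k ∈ S, extZ p (k - 1) * extZ q (n - k)
        = ∑ k ∈ S, extZ p (k + -1) * extZ q (n - 1 - (k + -1)) := by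
          apply Finset.sum_congr rfl; intro k _
          rw [show k - 1 = k + -1 from by ring, show n - k = n - 1 - (k + -1) from by ring]
      _ = ∑ k ∈ S, extZ p k * extZ q (n - 1 - k) := h
      _ = extZ (p * q) (n - 1) := (convZ p q (n - 1) (n + 3) (by omega) (by omega)).symm
  have sB3 : ∑ l ∈ S, extZ p (l + 1) * extZ q (n - l) = extZ (p * q) (n + 1) := by
    have h := shiftZ (fun j => extZ p j * extZ q (n + 1 - j)) n 1 (by norm_num) (by norm_num)
      (vanish (n + 1) (by omega))
    calc ∑ l ∈ S, extZ p (l + 1) * extZ q (n - l)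
        = ∑ l ∈ S, extZ p (l + 1) * extZ q (n + 1 - (l + 1)) := by
          apply Finset.sum_congr rfl; intro l _
          rw [show n - l = n + 1 - (l + 1) from by ring]
      _ = ∑ l ∈ S, extZ p l * extZ q (n + 1 - l) := h
      _ = extZ (p * q) (n + 1) := (convZ p q (n + 1) (n + 3) (by omega) (by omega)).symm
  have sA4 : ∑ k ∈ S, extZ p (k - 1) * extZ q (n - k + 1) = extZ (p * q) n := by
    have h := shiftZ (fun j => extZ p j * extZ q (n - j)) n (-1) (by norm_num) (by norm_num)
      (vanish n (by omega))
    calc ∑ k ∈ S, extZ p (k - 1) * extZ q (n - k + 1)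
        = ∑ k ∈ S, extZ p (k + -1) * extZ q (n - (k + -1)) := by
          apply Finset.sum_congr rfl; intro k _
          rw [show k - 1 = k + -1 from by ring, show n - k + 1 = n - (k + -1) from by ring]
      _ = ∑ k ∈ S, extZ p k * extZ q (n - k) := h
      _ = extZ (p * q) n := sB1
  have sB4 : ∑ l ∈ S, extZ p (l + 1) * extZ q (n - l - 1) = extZ (p * q) n := by
    have h := shiftZ (fun j => extZ p j * extZ q (n - j)) n 1 (by norm_num) (by norm_num)
      (vanish n (by omega))
    calc ∑ l ∈ S, extZ p (l + 1) * extZ q (n - l - 1)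
        = ∑ l ∈ S, extZ p (l + 1) * extZ q (n - (l + 1)) := by
          apply Finset.sum_congr rfl; intro l _
          rw [show n - l - 1 = n - (l + 1) from by ring]
      _ = ∑ l ∈ S, extZ p l * extZ q (n - l) := h
      _ = extZ (p * q) n := sB1
  -- the key identity
  have key :
      ∑ k ∈ S, ∑ l ∈ S,
        (extZ p k * extZ p l - extZ p (k - 1) * extZ p (l + 1)) *
          (extZ q (n - k) * extZ q (n - l) - extZ q (n - l - 1) * extZ q (n - k + 1))
      = 2 * (extZ (p * q) n * extZ (p * q) n - extZ (p * q) (n - 1) * extZ (p * q) (n + 1)) := by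
    have step1 : ∀ k ∈ S,
        ∑ l ∈ S,
          (extZ p k * extZ p l - extZ p (k - 1) * extZ p (l + 1)) *
            (extZ q (n - k) * extZ q (n - l) - extZ q (n - l - 1) * extZ q (n - k + 1))
        = (extZ p k * extZ q (n - k)) * ∑ l ∈ S, extZ p l * extZ q (n - l)
          - (extZ p k * extZ q (n - k + 1)) * ∑ l ∈ S, extZ p l * extZ q (n - l - 1)
          - (extZ p (k - 1) * extZ q (n - k)) * ∑ l ∈ S, extZ p (l + 1) * extZ q (n - l)
          + (extZ p (k - 1) * extZ q (n - k + 1)) * ∑ l ∈ S, extZ p (l + 1) * extZ q (n - l - 1) := by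
      intro k _
      rw [Finset.mul_sum, Finset.mul_sum, Finset.mul_sum, Finset.mul_sum,
        ← Finset.sum_sub_distrib, ← Finset.sum_sub_distrib, ← Finset.sum_add_distrib]
      apply Finset.sum_congr rfl
      intro l _
      ring
    rw [Finset.sum_congr rfl step1]
    rw [Finset.sum_add_distrib, Finset.sum_sub_distrib, Finset.sum_sub_distrib,
      ← Finset.sum_mul, ← Finset.sum_mul, ← Finset.sum_mul, ← Finset.sum_mul]
    rw [sB1, sB2, sA2, sA3, sB3, sA4, sB4]
    ring
  -- pointwise nonnegativity
  have nonneg : ∀ k l : ℤ,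
      0 ≤ (extZ p k * extZ p l - extZ p (k - 1) * extZ p (l + 1)) *
        (extZ q (n - k) * extZ q (n - l) - extZ q (n - l - 1) * extZ q (n - k + 1)) := by
    intro k l
    rcases le_or_gt k l with h | h
    · apply mul_nonneg
      · rw [sub_nonneg]
        exact glcP k l h
      · rw [sub_nonneg]
        exact (glcQ (n - l) (n - k) (by omega)).trans_eq (mul_comm _ _)
    · rcases eq_or_lt_of_le (by omega : l + 1 ≤ k) with he | hlt
      · have hz : extZ p k * extZ p l - extZ p (k - 1) * extZ p (l + 1) = 0 := by
          rw [← he, show l + 1 - 1 = l from by ring]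
          ring
        rw [hz, zero_mul]
      · have hF : extZ p k * extZ p l - extZ p (k - 1) * extZ p (l + 1) ≤ 0 := by
          have h1 := glcP (l + 1) (k - 1) (by omega)
          rw [show l + 1 - 1 = l from by ring, show k - 1 + 1 = k from by ring] at h1
          rw [sub_nonpos]
          calc extZ p k * extZ p l = extZ p l * extZ p k := mul_comm _ _
            _ ≤ extZ p (l + 1) * extZ p (k - 1) := h1
            _ = extZ p (k - 1) * extZ p (l + 1) := mul_comm _ _
        have hG : extZ q (n - k) * extZ q (n - l) - extZ q (n - l - 1) * extZ q (n - k + 1) ≤ 0 := by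
          have h1 := glcQ (n - k + 1) (n - l - 1) (by omega)
          rw [show n - k + 1 - 1 = n - k from by ring,
            show n - l - 1 + 1 = n - l from by ring] at h1
          rw [sub_nonpos]
          calc extZ q (n - k) * extZ q (n - l)
              ≤ extZ q (n - k + 1) * extZ q (n - l - 1) := h1
            _ = extZ q (n - l - 1) * extZ q (n - k + 1) := mul_comm _ _
        have := mul_nonneg (neg_nonneg.2 hF) (neg_nonneg.2 hG)
        nlinarith [this]
  have total : 0 ≤ 2 * (extZ (p * q) n * extZ (p * q) n
      - extZ (p * q) (n - 1) * extZ (p * q) (n + 1)) := by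
    rw [← key]
    exact Finset.sum_nonneg fun k _ => Finset.sum_nonneg fun l _ => nonneg k l
  have ecn : extZ (p * q) n = (p * q).coeff i := by rw [hn, extZ_natCast]
  have ecm : extZ (p * q) (n - 1) = (p * q).coeff (i - 1) := by
    rw [show n - 1 = ((i - 1 : ℕ) : ℤ) from by omega, extZ_natCast]
  have ecp : extZ (p * q) (n + 1) = (p * q).coeff (i + 1) := by
    rw [show n + 1 = ((i + 1 : ℕ) : ℤ) from by push_cast; omega, extZ_natCast]
  rw [ecn, ecm, ecp] at total
  nlinarith [total]
end

section
/- Let k ≥ 3. In the antiregular k-hypergraph with binary building string 0[k-1]1010... on n ≥ k vertices, the vertex-degrees satisfy: d(1) = d(2) = ... = d(k), d(k) > d(i_1) > d(i_2) for any isolated vertices k < i_1 < i_2, and d(j_1) < d(j_2) for any dominating vertices j_1 < j_2. In particular, exactly k vertices share a common vertex-degree and all other vertex-degrees are distinct. -/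
/-- In the antiregular `k`-hypergraph with building string `0[k-1]1010...`,
vertex `i` (1-indexed) is a dominating vertex iff `k ≤ i` and `i - k` is even. -/
def isDominating (k i : ℕ) : Prop := k ≤ i ∧ (i - k) % 2 = 0

instance (k i : ℕ) : Decidable (isDominating k i) := by unfold isDominating; infer_instance

/-- A `k`-set `e` of vertices is a hyperedge iff its last-added (i.e. largest) vertex
is dominating. -/
def isHyperedge (k : ℕ) (e : Finset ℕ) : Prop :=
  e.card = k ∧ ∃ M ∈ e, (∀ x ∈ e, x ≤ M) ∧ isDominating k M

instance (k : ℕ) (e : Finset ℕ) : Decidable (isHyperedge k e) := by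
  unfold isHyperedge; infer_instance

/-- The vertex-degree of vertex `v` in the antiregular `k`-hypergraph on
vertices `{1, …, n}`: the number of hyperedges containing `v`. -/
def antiregDegree (k n v : ℕ) : ℕ :=
  ((Finset.Icc 1 n).powerset.filter (fun e => isHyperedge k e ∧ v ∈ e)).card

/-!
Sorting the hyperedges through `v` by their largest vertex `M`, which has to be dominating, gives
`d(v) = [v dominating] * C(v-1, k-1) + ∑ C(M-2, k-2)` over the dominating `M > v`.
The vertices `1, …, k` all get `1 + ∑_{M > k}`. For `i ≥ k`, `d(i)` exceeds the tail sum over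
`M > i + 1` by a positive binomial (from `i` itself or from the dominating vertex `i + 1`), while an
isolated vertex `j` has exactly its tail sum over `M > j`; so it lies below every `i` with
`k ≤ i < j`. For consecutive dominating vertices `j < j + 2`, Pascal's rule
`C(j+1, k-1) = C(j-1, k-1) + C(j-1, k-2) + C(j, k-2)` leaves `d(j + 2)` ahead by `C(j-1, k-2)`.
-/

open Finset

lemma isDominating_self (k : ℕ) : isDominating k k := ⟨le_rfl, by simp⟩

lemma isDominating_add_one {k i : ℕ} (hki : k ≤ i) (hi : ¬ isDominating k i) :
    isDominating k (i + 1) := by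
  unfold isDominating at *
  omega

lemma not_isDominating_add_one {k i : ℕ} (hi : isDominating k i) : ¬ isDominating k (i + 1) := by
  unfold isDominating at *
  omega

lemma isDominating.add_two {k i : ℕ} (hi : isDominating k i) : isDominating k (i + 2) := by
  unfold isDominating at *
  omega

lemma sup_id_eq_iff {e : Finset ℕ} (he : e.Nonempty) {M : ℕ} :
    e.sup id = M ↔ M ∈ e ∧ ∀ x ∈ e, x ≤ M := by
  refine ⟨?_, fun ⟨hM, hle⟩ => le_antisymm (Finset.sup_le hle) (le_sup (f := id) hM)⟩
  rintro rfl
  obtain ⟨m, hm, hsup⟩ := e.exists_mem_eq_sup he id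
  exact ⟨hsup ▸ hm, fun x hx => le_sup (f := id) hx⟩

lemma isHyperedge_iff {k : ℕ} (hk : 1 ≤ k) {e : Finset ℕ} :
    isHyperedge k e ↔ #e = k ∧ isDominating k (e.sup id) := by
  refine ⟨fun ⟨hcard, M, hM, hle, hdom⟩ => ?_, fun ⟨hcard, hdom⟩ => ?_⟩
  · rw [(sup_id_eq_iff ⟨M, hM⟩).2 ⟨hM, hle⟩]
    exact ⟨hcard, hdom⟩
  · obtain ⟨hM, hle⟩ := (sup_id_eq_iff (e := e) (card_pos.mp (by omega))).1 rfl
    exact ⟨hcard, _, hM, hle, hdom⟩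

lemma filter_hyperedge_sup_eq {k n v M : ℕ} (hk : 1 ≤ k) (hMn : M ≤ n) :
    {e ∈ (Icc 1 n).powerset | (isHyperedge k e ∧ v ∈ e) ∧ e.sup id = M} =
      if isDominating k M then {e ∈ (Icc 1 M).powersetCard k | {v, M} ⊆ e} else ∅ := by
  ext e
  simp only [mem_filter, mem_powerset, isHyperedge_iff hk]
  split_ifs with hdom
  · simp only [mem_filter, mem_powersetCard, insert_subset_iff, singleton_subset_iff]
    constructor
    · rintro ⟨hsub, ⟨⟨hcard, -⟩, hv⟩, hsup⟩
      obtain ⟨hM, hle⟩ := (sup_id_eq_iff ⟨v, hv⟩).1 hsup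
      refine ⟨⟨fun x hx => ?_, hcard⟩, hv, hM⟩
      exact mem_Icc.2 ⟨(mem_Icc.1 (hsub hx)).1, hle x hx⟩
    · rintro ⟨⟨hsub, hcard⟩, hv, hM⟩
      have hsup : e.sup id = M :=
        (sup_id_eq_iff ⟨v, hv⟩).2 ⟨hM, fun x hx => (mem_Icc.1 (hsub hx)).2⟩
      refine ⟨hsub.trans (Icc_subset_Icc_right hMn), ⟨⟨hcard, hsup ▸ hdom⟩, hv⟩, hsup⟩
  · simp only [notMem_empty, iff_false]
    rintro ⟨-, ⟨⟨-, hd⟩, -⟩, rfl⟩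
    exact hdom hd

lemma card_filter_hyperedge_sup_eq {k n v M : ℕ} (hk : 2 ≤ k) (hv : 1 ≤ v) (hMn : M ≤ n) :
    #{e ∈ (Icc 1 n).powerset | (isHyperedge k e ∧ v ∈ e) ∧ e.sup id = M} =
      (if M = v ∧ isDominating k v then (v - 1).choose (k - 1) else 0) +
        (if v < M ∧ isDominating k M then (M - 2).choose (k - 2) else 0) := by
  rw [filter_hyperedge_sup_eq (by omega) hMn]
  by_cases hdom : isDominating k M
  swap
  · rw [if_neg hdom, if_neg (by rintro ⟨rfl, h⟩; exact hdom h), if_neg (by tauto)]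
    rfl
  rw [if_pos hdom]
  rcases lt_trichotomy v M with hvM | rfl | hMv
  · rw [if_neg (by omega), if_pos ⟨hvM, hdom⟩, zero_add,
      card_filter_powersetCard_subset _ _ _ ?_ (by rw [card_pair hvM.ne]; omega),
      card_pair hvM.ne, Nat.card_Icc, Nat.add_sub_cancel]
    intro x hx
    simp only [mem_insert, mem_singleton] at hx
    rw [mem_Icc]
    omega
  · rw [if_pos ⟨rfl, hdom⟩, if_neg (by omega), add_zero, pair_eq_singleton,
      card_filter_powersetCard_subset _ _ _ (by simpa using hv) (by simp; omega),
      card_singleton, Nat.card_Icc, Nat.add_sub_cancel]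
  · rw [if_neg (by omega), if_neg (by omega), card_eq_zero, filter_eq_empty_iff]
    intro e he hvMe
    have := mem_Icc.1 ((mem_powersetCard.1 he).1 (hvMe (mem_insert_self v {M})))
    omega

/-- Hyperedges through `v` whose largest vertex is a later vertex `M`: `M` must be dominating, and
the hyperedge is `{v, M}` together with `k - 2` of the other `M - 2` vertices below `M`. -/
def laterDegree (k n v : ℕ) : ℕ :=
  ∑ M ∈ Ioc v n, if isDominating k M then (M - 2).choose (k - 2) else 0

lemma antiregDegree_eq_add_laterDegree {k n v : ℕ} (hk : 2 ≤ k) (hv : 1 ≤ v) (hvn : v ≤ n) :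
    antiregDegree k n v =
      (if isDominating k v then (v - 1).choose (k - 1) else 0) + laterDegree k n v := by
  rw [antiregDegree, card_eq_sum_card_fiberwise (f := fun e => e.sup id) (t := Icc 1 n) ?maps]
  simp only [filter_filter]
  rw [sum_congr rfl fun M hM => card_filter_hyperedge_sup_eq hk hv (mem_Icc.1 hM).2,
    sum_add_distrib]
  congr 1
  · simp [ite_and, hv, hvn]
  · rw [laterDegree, ← sum_filter, ← sum_filter]
    congr 1
    ext M
    simp only [mem_filter, mem_Icc, mem_Ioc]
    exact ⟨fun ⟨⟨_, hMn⟩, hvM, hd⟩ => ⟨⟨hvM, hMn⟩, hd⟩,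
      fun ⟨⟨hvM, hMn⟩, hd⟩ => ⟨⟨by omega, hMn⟩, hvM, hd⟩⟩
  case maps =>
    intro e he
    simp only [coe_filter, mem_powerset, Set.mem_ofPred_eq] at he
    obtain ⟨hsub, ⟨⟨hcard, -⟩, -⟩⟩ := he
    obtain ⟨M, hM, hsup⟩ := e.exists_mem_eq_sup (card_pos.mp (by omega)) id
    show e.sup id ∈ Icc 1 n
    exact hsup ▸ hsub hM

lemma laterDegree_antitone (k n : ℕ) : Antitone (laterDegree k n) :=
  fun _ _ h => sum_le_sum_of_subset (Ioc_subset_Ioc_left h)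

lemma laterDegree_eq_add_laterDegree_add_one (k : ℕ) {n v : ℕ} (hvn : v < n) :
    laterDegree k n v =
      (if isDominating k (v + 1) then (v - 1).choose (k - 2) else 0) + laterDegree k n (v + 1) := by
  rw [laterDegree, ← insert_Ioc_add_one_left_eq_Ioc hvn, sum_insert (by simp),
    show v + 1 - 2 = v - 1 by omega]
  rfl

lemma laterDegree_eq_of_forall_not_isDominating {k n v w : ℕ} (hvw : v ≤ w)
    (h : ∀ M, v < M → M ≤ w → ¬ isDominating k M) :
    laterDegree k n v = laterDegree k n w := by
  refine (sum_subset (Ioc_subset_Ioc_left hvw) fun M hM hM' => if_neg (h M ?_ ?_)).symm <;>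
    simp only [mem_Ioc, not_and] at hM hM' <;> omega

lemma antiregDegree_of_isDominating {k n v : ℕ} (hk : 2 ≤ k) (hv : isDominating k v)
    (hvn : v ≤ n) : antiregDegree k n v = (v - 1).choose (k - 1) + laterDegree k n v := by
  rw [antiregDegree_eq_add_laterDegree hk (by have := hv.1; omega) hvn, if_pos hv]

lemma antiregDegree_of_not_isDominating {k n v : ℕ} (hk : 2 ≤ k) (hv₁ : 1 ≤ v)
    (hvn : v ≤ n) (hv : ¬ isDominating k v) : antiregDegree k n v = laterDegree k n v := by
  rw [antiregDegree_eq_add_laterDegree hk hv₁ hvn, if_neg hv, zero_add]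

lemma antiregDegree_eq_antiregDegree_self {k n v : ℕ} (hk : 2 ≤ k) (hkn : k ≤ n)
    (hv : 1 ≤ v) (hvk : v ≤ k) : antiregDegree k n v = antiregDegree k n k := by
  rcases hvk.eq_or_lt with rfl | hvk
  · rfl
  have hdk := isDominating_self k
  rw [antiregDegree_of_not_isDominating hk hv (by omega) fun h => absurd h.1 (by omega),
    antiregDegree_of_isDominating hk hdk hkn,
    laterDegree_eq_of_forall_not_isDominating (w := k - 1) (by omega)
      fun M _ hM h => absurd h.1 (by omega),
    laterDegree_eq_add_laterDegree_add_one k (by omega), Nat.sub_add_cancel (by omega),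
    if_pos hdk, show k - 1 - 1 = k - 2 by omega, Nat.choose_self, Nat.choose_self]

lemma laterDegree_add_one_lt_antiregDegree {k n i : ℕ} (hk : 2 ≤ k) (hki : k ≤ i)
    (hin : i < n) : laterDegree k n (i + 1) < antiregDegree k n i := by
  by_cases hi : isDominating k i
  · rw [antiregDegree_of_isDominating hk hi hin.le]
    have := laterDegree_antitone k n (Nat.le_add_right i 1)
    have := Nat.choose_pos (show k - 1 ≤ i - 1 by omega)
    omega
  · rw [antiregDegree_of_not_isDominating hk (by omega) hin.le hi,
      laterDegree_eq_add_laterDegree_add_one k hin, if_pos (isDominating_add_one hki hi)]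
    have := Nat.choose_pos (show k - 2 ≤ i - 1 by omega)
    omega

lemma antiregDegree_lt_of_not_isDominating {k n i j : ℕ} (hk : 2 ≤ k) (hki : k ≤ i)
    (hij : i < j) (hjn : j ≤ n) (hj : ¬ isDominating k j) :
    antiregDegree k n j < antiregDegree k n i :=
  calc antiregDegree k n j = laterDegree k n j :=
        antiregDegree_of_not_isDominating hk (by omega) hjn hj
    _ ≤ laterDegree k n (i + 1) := laterDegree_antitone k n hij
    _ < antiregDegree k n i := laterDegree_add_one_lt_antiregDegree hk hki (by omega)

lemma antiregDegree_lt_add_two {k n j : ℕ} (hk : 2 ≤ k) (hj : isDominating k j)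
    (hjn : j + 2 ≤ n) : antiregDegree k n j < antiregDegree k n (j + 2) := by
  have hj₂ := hj.add_two
  rw [antiregDegree_of_isDominating hk hj (by omega), antiregDegree_of_isDominating hk hj₂ hjn,
    laterDegree_eq_add_laterDegree_add_one k (v := j) (by omega),
    if_neg (not_isDominating_add_one hj),
    laterDegree_eq_add_laterDegree_add_one k (v := j + 1) (by omega), if_pos hj₂, zero_add,
    show j + 1 + 1 = j + 2 from rfl]
  obtain ⟨m, rfl⟩ : ∃ m, k = m + 2 := ⟨k - 2, by omega⟩
  obtain ⟨b, rfl⟩ : ∃ b, j = b + 1 := ⟨j - 1, by have := hj.1; omega⟩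
  simp only [Nat.add_sub_cancel, show b + 1 + 2 - 1 = b + 2 by omega,
    show m + 2 - 1 = m + 1 by omega]
  rw [Nat.choose_succ_succ' (b + 1), Nat.choose_succ_succ' b]
  have := Nat.choose_pos (show m ≤ b by have := hj.1; omega)
  omega

lemma antiregDegree_lt_of_isDominating {k n i j : ℕ} (hk : 2 ≤ k) (hij : i < j) (hjn : j ≤ n)
    (hi : isDominating k i) (hj : isDominating k j) :
    antiregDegree k n i < antiregDegree k n j := by
  obtain ⟨m, rfl⟩ : ∃ m, j = i + 2 * (m + 1) := ⟨(j - i) / 2 - 1, by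
    unfold isDominating at hi hj; omega⟩
  induction m with
  | zero => exact antiregDegree_lt_add_two hk hi hjn
  | succ m ih =>
    have hdom : isDominating k (i + 2 * (m + 1)) := by unfold isDominating at *; omega
    exact (ih (by omega) (by omega) hdom).trans (antiregDegree_lt_add_two hk hdom (by omega))

lemma antiregDegree_ne_of_lt {k n i j : ℕ} (hk : 2 ≤ k) (hkn : k ≤ n) (hi : 1 ≤ i)
    (hij : i < j) (hjn : j ≤ n) (hkj : k < j) : antiregDegree k n i ≠ antiregDegree k n j := by
  have hdk := isDominating_self k
  by_cases hj : isDominating k j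
  · refine (?_ : antiregDegree k n i < antiregDegree k n j).ne
    rcases le_or_gt i k with hik | hki
    · rw [antiregDegree_eq_antiregDegree_self hk hkn hi hik]
      exact antiregDegree_lt_of_isDominating hk hkj hjn hdk hj
    · by_cases hdi : isDominating k i
      · exact antiregDegree_lt_of_isDominating hk hij hjn hdi hj
      · exact (antiregDegree_lt_of_not_isDominating hk le_rfl hki (by omega) hdi).trans
          (antiregDegree_lt_of_isDominating hk hkj hjn hdk hj)
  · refine (?_ : antiregDegree k n j < antiregDegree k n i).ne'
    rcases le_or_gt i k with hik | hki
    · rw [antiregDegree_eq_antiregDegree_self hk hkn hi hik]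
      exact antiregDegree_lt_of_not_isDominating hk le_rfl hkj hjn hj
    · exact antiregDegree_lt_of_not_isDominating hk hki.le hij hjn hj

theorem stmt_13 (k n : ℕ) (hk : 3 ≤ k) (hn : k ≤ n) :
    (∀ i j : ℕ, 1 ≤ i → i ≤ k → 1 ≤ j → j ≤ k →
        antiregDegree k n i = antiregDegree k n j) ∧
    (∀ i₁ i₂ : ℕ, k < i₁ → i₁ < i₂ → i₂ ≤ n →
        ¬ isDominating k i₁ → ¬ isDominating k i₂ →
        antiregDegree k n k > antiregDegree k n i₁ ∧
          antiregDegree k n i₁ > antiregDegree k n i₂) ∧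
    (∀ j₁ j₂ : ℕ, j₁ < j₂ → j₂ ≤ n → isDominating k j₁ → isDominating k j₂ →
        antiregDegree k n j₁ < antiregDegree k n j₂) ∧
    (∀ i j : ℕ, 1 ≤ i → i < j → j ≤ n → k < j →
        antiregDegree k n i ≠ antiregDegree k n j) := by
  have hk₂ : 2 ≤ k := by omega
  refine ⟨fun i j hi hik hj hjk => ?_, fun i₁ i₂ hki₁ hi₁₂ hi₂n hi₁ hi₂ => ⟨?_, ?_⟩,
    fun j₁ j₂ hj₁₂ hj₂n hj₁ hj₂ => antiregDegree_lt_of_isDominating hk₂ hj₁₂ hj₂n hj₁ hj₂,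
    fun i j hi hij hjn hkj => antiregDegree_ne_of_lt hk₂ hn hi hij hjn hkj⟩
  · rw [antiregDegree_eq_antiregDegree_self hk₂ hn hi hik,
      antiregDegree_eq_antiregDegree_self hk₂ hn hj hjk]
  · exact antiregDegree_lt_of_not_isDominating hk₂ le_rfl hki₁ (by omega) hi₁
  · exact antiregDegree_lt_of_not_isDominating hk₂ hki₁.le hi₁₂ hi₂n hi₂
end

section
/- Let H = (V, E) be a hypergraph and v ∈ V with {v} ∉ E. Then I(H;x) = I(H⊖v;x) + x·I(H∼v;x), where H⊖v is the hypergraph obtained by deleting v together with all hyperedges containing v, and H∼v is obtained by removing v from the vertex set and from every hyperedge containing it. -/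
open Polynomial

/-- The independence polynomial of the hypergraph with vertex set `V` and
hyperedge set `E`: the sum of `x^|W|` over all subsets `W ⊆ V` containing no hyperedge. -/
noncomputable def indPoly (V : Finset ℕ) (E : Finset (Finset ℕ)) : Polynomial ℤ :=
  ∑ W ∈ V.powerset.filter (fun W => ∀ e ∈ E, ¬ e ⊆ W), X ^ W.card

/-!
Split the independent sets `W` of `H` according to whether `v ∈ W`. If `v ∉ W`, the hyperedges
through `v` cannot lie in `W`, so `W` is independent in `H` iff it is independent in `H ⊖ v`.
If `v ∈ W`, then `e ⊆ W ↔ e \ {v} ⊆ W \ {v}`, so `W ↦ W \ {v}` is a bijection onto the independent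
sets of `H ∼ v`, lowering the size by one.
-/

open Finset

namespace Hypergraph

variable {α : Type*} [DecidableEq α]

def indepSets (V : Finset α) (E : Finset (Finset α)) : Finset (Finset α) :=
  V.powerset.filter fun W => ∀ e ∈ E, ¬ e ⊆ W

theorem indPoly_eq_sum_indepSets (V : Finset ℕ) (E : Finset (Finset ℕ)) :
    indPoly V E = ∑ W ∈ indepSets V E, X ^ W.card :=
  rfl

theorem filter_notMem_indepSets (V : Finset α) (E : Finset (Finset α)) (v : α) :
    (indepSets V E).filter (v ∉ ·) = indepSets (V.erase v) (E.filter (v ∉ ·)) := by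
  ext W
  simp only [indepSets, mem_filter, mem_powerset, subset_erase, and_imp]
  constructor
  · rintro ⟨⟨hWV, hW⟩, hvW⟩
    exact ⟨⟨hWV, hvW⟩, fun e he _ => hW e he⟩
  · rintro ⟨⟨hWV, hvW⟩, hW⟩
    exact ⟨⟨hWV, fun e he heW => hW e he (fun hve => hvW (heW hve)) heW⟩, hvW⟩

theorem image_erase_filter_mem_indepSets {V : Finset α} (E : Finset (Finset α)) {v : α}
    (hv : v ∈ V) :
    ((indepSets V E).filter (v ∈ ·)).image (·.erase v) =
      indepSets (V.erase v) (E.image (·.erase v)) := by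
  ext U
  simp only [indepSets, forall_mem_image]
  simp only [mem_image, mem_filter, mem_powerset]
  constructor
  · rintro ⟨W, ⟨⟨hWV, hW⟩, hvW⟩, rfl⟩
    refine ⟨erase_subset_erase v hWV, fun e he heW => hW e he ?_⟩
    rwa [← insert_erase hvW, subset_insert_iff]
  · rintro ⟨hUV, hU⟩
    have hvU : v ∉ U := (subset_erase.mp hUV).2
    refine ⟨insert v U, ⟨⟨insert_subset hv (hUV.trans (erase_subset v V)), fun e he heW => ?_⟩,
      mem_insert_self v U⟩, erase_insert hvU⟩
    exact hU he (subset_insert_iff.mp heW)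

end Hypergraph

open Hypergraph

theorem stmt_14_general (V : Finset ℕ) (E : Finset (Finset ℕ)) (v : ℕ) (hv : v ∈ V) :
    indPoly V E =
      indPoly (V.erase v) (E.filter (fun e => v ∉ e)) +
        X * indPoly (V.erase v) (E.image (fun e => e.erase v)) := by
  have hinj : Set.InjOn (·.erase v) ((indepSets V E).filter (v ∈ ·) : Set (Finset ℕ)) :=
    fun W hW W' hW' => erase_injOn' v (mem_filter.mp hW).2 (mem_filter.mp hW').2
  rw [indPoly_eq_sum_indepSets, ← sum_filter_not_add_sum_filter _ (v ∈ ·),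
    indPoly_eq_sum_indepSets, indPoly_eq_sum_indepSets, filter_notMem_indepSets,
    ← image_erase_filter_mem_indepSets E hv, sum_image hinj, mul_sum]
  congr 1
  refine sum_congr rfl fun W hW => ?_
  rw [← card_erase_add_one (mem_filter.mp hW).2, pow_succ']

theorem stmt_14 (V : Finset ℕ) (E : Finset (Finset ℕ)) (v : ℕ) (hv : v ∈ V)
    (hE : ∀ e ∈ E, e ⊆ V) (hne : ∀ e ∈ E, e.Nonempty) (hv1 : ({v} : Finset ℕ) ∉ E) :
    indPoly V E =
      indPoly (V.erase v) (E.filter (fun e => v ∉ e)) +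
        X * indPoly (V.erase v) (E.image (fun e => e.erase v)) :=
  stmt_14_general V E v hv
end

section
/- Let H be the 4-uniform hypergraph on vertex set V = {w, -2, -1, 0, 1, 2} whose hyperedges are exactly the sets {w, x₁, x₂, x₃} with distinct x₁, x₂, x₃ ∈ {-2,-1,0,1,2} and x₁ + x₂ + x₃ > 0. Then H is T2-threshold (via c(w) = 10, c(v) = v otherwise, and τ = 10), but H is not {0,1}-constructable. -/
open Finset

/-- The vertex `w` of the hypergraph, represented by the integer `10`. -/
def w : ℤ := 10

/-- The vertex set `{w, -2, -1, 0, 1, 2}`. -/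
noncomputable def V : Finset ℤ := insert w (Finset.Icc (-2) 2)

/-- The hyperedges: the sets `{w, x₁, x₂, x₃}` with distinct `x₁,x₂,x₃ ∈ {-2,…,2}`
and `x₁ + x₂ + x₃ > 0`. -/
noncomputable def E : Finset (Finset ℤ) :=
  V.powerset.filter (fun e => e.card = 4 ∧ w ∈ e ∧ 0 < ∑ x ∈ e.erase w, x)

/-- A `k`-uniform hypergraph `(V', E')` is `{0,1}`-constructable if its vertices can be
added one by one (an enumeration `f` together with bits `b`), where a bit `true` at step `j`
means vertex `f j` is dominating, such that the hyperedges are exactly the `k`-subsets of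
vertices whose last-added vertex is dominating. -/
def ZeroOneConstructable (k : ℕ) (V' : Finset ℤ) (E' : Finset (Finset ℤ)) : Prop :=
  ∃ (f : ℕ → ℤ) (b : ℕ → Bool),
    Set.InjOn f (Set.Iio V'.card) ∧
    (Finset.range V'.card).image f = V' ∧
    ∀ e : Finset ℤ, e ∈ E' ↔
      (e ⊆ V' ∧ e.card = k ∧
        ∃ j < V'.card, b j = true ∧ f j ∈ e ∧ ∀ x ∈ e, ∀ i < V'.card, f i = x → i ≤ j)

/-! The threshold labelling is checked by evaluating all `4`-subsets of `V`. For the second part,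
the vertex added last in a `{0,1}`-construction is either isolated or dominating; but in `H` every
vertex lies in some hyperedge and also in some `4`-subset of `V` that is not a hyperedge. -/

theorem ZeroOneConstructable.exists_isolated_or_dominating {k : ℕ} {V' : Finset ℤ}
    {E' : Finset (Finset ℤ)} (h : ZeroOneConstructable k V' E') (hV : V'.Nonempty) :
    ∃ v ∈ V', (∀ e ∈ E', v ∉ e) ∨ ∀ e ⊆ V', e.card = k → v ∈ e → e ∈ E' := by
  obtain ⟨f, b, -, himg, hE⟩ := h
  have hlast : V'.card - 1 < V'.card := Nat.sub_lt hV.card_pos one_pos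
  have hmem : f (V'.card - 1) ∈ V' := by
    simpa only [himg] using mem_image_of_mem f (mem_range.2 hlast)
  refine ⟨_, hmem, ?_⟩
  cases hb : b (V'.card - 1)
  · left
    intro e he hve
    obtain ⟨-, -, j, hj, hbj, -, hmax⟩ := (hE e).1 he
    obtain rfl : j = V'.card - 1 := by
      have := hmax _ hve _ hlast rfl
      omega
    exact Bool.false_ne_true (hb ▸ hbj)
  · right
    intro e he hc hve
    exact (hE e).2 ⟨he, hc, _, hlast, hb, hve, fun _ _ i hi _ => Nat.le_sub_one_of_lt hi⟩

lemma threshold_iff_mem_E : ∀ S ∈ V.powerset, S.card = 4 →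
    ((∑ x ∈ S, (if x = w then (10 : ℤ) else x)) > 10 ↔ S ∈ E) := by
  decide

lemma exists_mem_E_of_mem_V : ∀ v ∈ V, ∃ e ∈ E, v ∈ e := by
  decide

lemma exists_nonedge_of_mem_V : ∀ v ∈ V, ∃ e ∈ V.powerset, e.card = 4 ∧ v ∈ e ∧ e ∉ E := by
  decide

theorem stmt_18 :
    (∀ S : Finset ℤ, S ⊆ V → S.card = 4 →
      ((∑ x ∈ S, (if x = w then (10 : ℤ) else x)) > 10 ↔ S ∈ E)) ∧
    ¬ ZeroOneConstructable 4 V E := by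
  refine ⟨fun S hS => threshold_iff_mem_E S (mem_powerset.2 hS), fun h => ?_⟩
  obtain ⟨v, hv, hisolated | hdominating⟩ := h.exists_isolated_or_dominating (by decide)
  · obtain ⟨e, he, hve⟩ := exists_mem_E_of_mem_V v hv
    exact hisolated e he hve
  · obtain ⟨e, he, hcard, hve, hne⟩ := exists_nonedge_of_mem_V v hv
    exact hne (hdominating e (mem_powerset.1 he) hcard hve)
end
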